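/- Let f: (X, 𝓜_X) → (Y, 𝓜_Y) be a log smooth and integral morphism of fine log schemes. Then the underlying morphism of schemes X → Y is flat. In the local model: if Q → P is an injective integral morphism of fine monoids with Q^gp → P^gp having finite kernel and torsion cokernel, then ℤ[Q] → ℤ[P] is flat. -/

import Mathlib

/-- A morphism of (additively written) integral monoids `h : Q → P` is integral. -/
def IsIntegralMonoidHom {Q P : Type*} [AddCommMonoid Q] [AddCommMonoid P]
    (h : Q →+ P) : Prop :=
  ∀ a₁ a₂ : Q, ∀ b₁ b₂ : P, h a₁ + b₁ = h a₂ + b₂ →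
    ∃ a₃ a₄ : Q, ∃ b : P, b₁ = h a₃ + b ∧ a₁ + a₃ = a₂ + a₄

/-!
Call `p₁, p₂ ∈ P` equivalent when `p₁ + h q₁ = p₂ + h q₂` for some `q₁, q₂`. Integrality of `h`
says that two equivalent elements lie in a common translate `b + h(Q)`, so every finite part of an
equivalence class does. As `h` is injective and `P` cancellative, `ℤ[b + h(Q)]` is free of rank one
over `ℤ[Q]`, and translates lying in distinct classes are independent. Hence every finite subset
of `ℤ[P]` lies in a free `ℤ[Q]`-submodule, which makes `ℤ[P]` flat by the equational criterion.
-/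

open AddMonoidAlgebra Function

theorem Module.Flat.of_forall_finset_subset_flat {R M : Type*} [CommRing R] [AddCommGroup M]
    [Module R M] (H : ∀ s : Finset M, ∃ N : Submodule R M, Module.Flat R N ∧ ↑s ⊆ (N : Set M)) :
    Module.Flat R M := by
  classical
  refine Module.Flat.of_forall_isTrivialRelation fun {l f x} hfx => ?_
  obtain ⟨N, hN, hxN⟩ := H (Finset.univ.image x)
  let x' : Fin l → N := fun i => ⟨x i, hxN (by simp)⟩
  obtain ⟨k, a, y, hxy, ha⟩ := Module.Flat.isTrivialRelation_of_sum_smul_eq_zero (f := f) (x := x')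
    (Subtype.ext (by simpa [x'] using hfx))
  exact ⟨k, a, fun j => y j, fun i => by simpa [x'] using congrArg Subtype.val (hxy i), ha⟩

namespace AddMonoidHom

variable {Q P : Type*} [AddCommMonoid Q] [AddCommMonoid P] (h : Q →+ P)

def cosetSetoid : Setoid P where
  r p₁ p₂ := ∃ q₁ q₂, p₁ + h q₁ = p₂ + h q₂
  iseqv :=
    { refl := fun _ => ⟨0, 0, rfl⟩
      symm := fun ⟨q₁, q₂, e⟩ => ⟨q₂, q₁, e.symm⟩
      trans := fun ⟨q₁, q₂, e⟩ ⟨q₃, q₄, e'⟩ => ⟨q₁ + q₃, q₄ + q₂, by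
        rw [map_add, map_add, ← add_assoc, e, add_right_comm, e', add_assoc]⟩ }

theorem cosetSetoid_self_add (b : P) (q : Q) : h.cosetSetoid b (b + h q) :=
  ⟨q, 0, by simp⟩

end AddMonoidHom

namespace IsIntegralMonoidHom

variable {Q P : Type*} [AddCommMonoid Q] [AddCommMonoid P] [IsRightCancelAdd P] {h : Q →+ P}

theorem exists_common_lower_bound (hint : IsIntegralMonoidHom h) {p₁ p₂ : P}
    (hp : h.cosetSetoid p₁ p₂) : ∃ b q₁ q₂, p₁ = b + h q₁ ∧ p₂ = b + h q₂ := by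
  obtain ⟨q₁, q₂, hp⟩ := hp
  obtain ⟨q₃, q₄, b, hb, hq⟩ := hint q₁ q₂ p₁ p₂ (by rw [add_comm, hp, add_comm])
  refine ⟨b, q₃, q₄, by rw [hb, add_comm], add_right_cancel (b := h q₂) ?_⟩
  rw [← hp, hb, add_assoc, add_left_comm, ← map_add, add_comm q₃, hq, add_comm q₂, map_add,
    add_assoc]

theorem exists_lower_bound_finset (hint : IsIntegralMonoidHom h) (T : Finset P) (p : P) :
    ∃ b, h.cosetSetoid b p ∧ ∀ t ∈ T, h.cosetSetoid t p → ∃ q, t = b + h q := by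
  classical
  induction T using Finset.induction_on with
  | empty => exact ⟨p, h.cosetSetoid.refl' p, by simp⟩
  | insert t T _ ih =>
    obtain ⟨b, hbp, hb⟩ := ih
    by_cases htp : h.cosetSetoid t p
    · obtain ⟨b', q₁, q₂, rfl, rfl⟩ :=
        hint.exists_common_lower_bound (h.cosetSetoid.trans' hbp (h.cosetSetoid.symm' htp))
      refine ⟨b', h.cosetSetoid.trans' (h.cosetSetoid_self_add b' q₁) hbp, ?_⟩
      intro t ht htp
      rcases Finset.mem_insert.1 ht with rfl | ht
      · exact ⟨q₂, rfl⟩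
      · obtain ⟨q, rfl⟩ := hb t ht htp
        exact ⟨q₁ + q, by rw [map_add, add_assoc]⟩
    · refine ⟨b, hbp, ?_⟩
      intro t' ht' ht'p
      rcases Finset.mem_insert.1 ht' with rfl | ht'
      · exact (htp ht'p).elim
      · exact hb t' ht' ht'p

end IsIntegralMonoidHom

namespace AddMonoidAlgebra

theorem mapDomain_mul_single_one {k Q P : Type*} [CommSemiring k] [AddCommMonoid P] (f : Q → P)
    (r : k[Q]) (b : P) :
    mapDomain f r * single b 1 = mapDomain (fun q => f q + b) r := by
  induction r using AddMonoidAlgebra.induction_linear with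
  | zero => simp [mapDomain_zero]
  | add r s hr hs => rw [mapDomain_add, add_mul, hr, hs, mapDomain_add]
  | single q c => simp [mapDomain_single]

variable {k : Type*} [CommRing k] {Q P : Type*} [AddCommMonoid Q] [AddCommMonoid P]

theorem linearIndependent_single_one_of_cosetSetoid [IsRightCancelAdd P] {h : Q →+ P}
    (hinj : Injective h) {ι : Type*} (b : ι → P) (hb : ∀ i j, h.cosetSetoid (b i) (b j) → i = j) :
    letI := (mapDomainRingHom k h).toAlgebra
    LinearIndependent k[Q] fun i => single (b i) (1 : k) := by
  classical
  let _ := (mapDomainRingHom k h).toAlgebra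
  have smul_single (r : k[Q]) (i : ι) :
      r • single (b i) (1 : k) = mapDomain (fun q => h q + b i) r := by
    rw [Algebra.smul_def, RingHom.algebraMap_toAlgebra, mapDomainRingHom_apply,
      mapDomain_mul_single_one]
  have coeff_smul_single (r : k[Q]) (i j : ι) (q : Q) :
      (r • single (b j) (1 : k)).coeff (h q + b i) = if j = i then r.coeff q else 0 := by
    rw [smul_single, coeff_mapDomain]
    split_ifs with hji
    · subst hji
      exact Finsupp.mapDomain_apply (fun q₁ q₂ e => hinj (add_right_cancel e)) _ _
    · refine Finsupp.mapDomain_of_notMem_range _ _ ?_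
      rintro ⟨q', hq'⟩
      exact hji (hb j i ⟨q', q, by rw [add_comm (b j), add_comm (b i)]; exact hq'⟩)
  rw [linearIndependent_iff]
  intro g hg
  ext i q
  have := congrArg (fun x : k[P] => x.coeff (h q + b i)) hg
  obtain hgi | hgi := eq_or_ne (g i) 0
  · simp [hgi]
  simpa [hgi, Finsupp.linearCombination_apply, Finsupp.sum, coeff_sum, Finsupp.finsetSum_apply,
    coeff_smul_single] using this

end AddMonoidAlgebra

namespace IsIntegralMonoidHom

theorem flat_mapDomainRingHom (k : Type*) [CommRing k] {Q P : Type*} [AddCommMonoid Q]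
    [AddCommMonoid P] [IsRightCancelAdd P] {h : Q →+ P} (hinj : Injective h)
    (hint : IsIntegralMonoidHom h) : (mapDomainRingHom k h).Flat := by
  classical
  algebraize [mapDomainRingHom k h]
  refine Module.Flat.of_forall_finset_subset_flat fun s => ?_
  choose b hb using fun c : Quotient h.cosetSetoid =>
    hint.exists_lower_bound_finset (s.biUnion fun x => x.coeff.support) c.out
  have hb_inj (c c' : Quotient h.cosetSetoid) (hcc' : h.cosetSetoid (b c) (b c')) : c = c' := by
    rw [← c.out_eq, ← c'.out_eq]
    exact Quotient.sound (h.cosetSetoid.trans' (h.cosetSetoid.symm' (hb c).1)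
      (h.cosetSetoid.trans' hcc' (hb c').1))
  have hli := linearIndependent_single_one_of_cosetSetoid (k := k) hinj b hb_inj
  let N := Submodule.span k[Q] (Set.range fun c => single (b c) (1 : k))
  have : Module.Free k[Q] N := .of_basis (Module.Basis.span hli)
  refine ⟨N, inferInstance, fun x hx => ?_⟩
  rw [← x.sum_coeff_single]
  refine Submodule.finsuppSum_mem _ _ _ _ fun p hp => ?_
  let c : Quotient h.cosetSetoid := Quotient.mk'' p
  obtain ⟨q, hq⟩ := (hb c).2 p (Finset.mem_biUnion.2 ⟨x, hx, Finsupp.mem_support_iff.2 hp⟩)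
    (h.cosetSetoid.symm' (Quotient.mk_out' p))
  have : single p (x.coeff p) = single q (x.coeff p) • single (b c) (1 : k) := by
    rw [Algebra.smul_def, RingHom.algebraMap_toAlgebra, mapDomainRingHom_apply, mapDomain_single,
      single_mul_single, mul_one, hq, add_comm]
  rw [this]
  exact Submodule.smul_mem _ _ (Submodule.subset_span ⟨c, rfl⟩)

end IsIntegralMonoidHom

theorem kato_flatness_local_general {Q P : Type} [AddCommMonoid Q] [AddCommMonoid P]
    (hPcan : ∀ a b c : P, a + c = b + c → a = b)
    (h : Q →+ P) (hinj : Function.Injective h) (hint : IsIntegralMonoidHom h) :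
    RingHom.Flat (AddMonoidAlgebra.mapDomainRingHom ℤ h) := by
  have : IsRightCancelAdd P := ⟨fun c _ _ e => hPcan _ _ c e⟩
  exact hint.flat_mapDomainRingHom ℤ hinj

/-- Kato's flatness theorem, local model: if `Q → P` is an injective integral
morphism of fine (finitely generated, cancellative) monoids whose groupified
map `Q^gp → P^gp` has torsion cokernel (every element of `P` has a positive
multiple lying in the image of `Q^gp`), then the induced map of monoid algebras
`ℤ[Q] → ℤ[P]` is flat — i.e. the underlying morphism of a log smooth and
integral morphism of fine log schemes is flat. -/
theorem kato_flatness_local {Q P : Type} [AddCommMonoid Q] [AddCommMonoid P]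
    (hQcan : ∀ a b c : Q, a + c = b + c → a = b)
    (hPcan : ∀ a b c : P, a + c = b + c → a = b)
    (hQfg : AddMonoid.FG Q) (hPfg : AddMonoid.FG P)
    (h : Q →+ P) (hinj : Function.Injective h) (hint : IsIntegralMonoidHom h)
    (htor : ∀ p : P, ∃ n : ℕ, 0 < n ∧ ∃ q q' : Q, n • p + h q = h q') :
    RingHom.Flat (AddMonoidAlgebra.mapDomainRingHom ℤ h) :=
  kato_flatness_local_general hPcan h hinj hint
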